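/- arXiv:1706.09851 — 2 statements merged into one kernel-verified Lean document; each statement's English description precedes it below -/
import Mathlib

section
/- Let d ≥ 2, let y₀ ∈ ℝ^d, and let A ⊂ (0,∞) be a compact set with Hausdorff dimension 1 and one-dimensional Lebesgue measure zero. Let E = {x ∈ ℝ^d : |x - y₀| ∈ A}. Then dim_H(E) = d, while the pinned distance set Δ^{y₀}(E) = {|x - y₀| : x ∈ E} is contained in A and hence has one-dimensional Lebesgue measure zero. -/
open MeasureTheory MeasureTheory.Measure Set Filter
open scoped ENNReal NNReal Topology

lemma slice_cover {m : ℕ} (s : ℝ≥0) (hs : 0 < s) (A : Set ℝ) {ε : ℝ} (hε : 0 < ε)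
    (M : ℝ≥0∞) (hM : M ≠ ∞) {δ : ℝ≥0∞} (hδ1 : δ ≤ 1)
    (t : ℕ → Set (ℝ × (Fin m → ℝ)))
    (hcov : A ×ˢ (univ.pi fun _ : Fin m => Icc (0:ℝ) ε) ⊆ ⋃ n, t n)
    (hdiam : ∀ n, EMetric.diam (t n) ≤ δ)
    (hsum : ∑' n, ⨆ _ : (t n).Nonempty, EMetric.diam (t n) ^ ((s:ℝ) + m) ≤ M) :
    ∃ u : ℕ → Set ℝ, A ⊆ ⋃ n, u n ∧ (∀ n, EMetric.diam (u n) ≤ 2 * δ) ∧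
      ∑' n, EMetric.diam (u n) ^ (s:ℝ) ≤ 2 ^ ((s:ℝ) + m) * M / (ENNReal.ofReal ε) ^ m + 1 := by
  classical
  set Q : Set (Fin m → ℝ) := univ.pi fun _ : Fin m => Icc (0:ℝ) ε with hQ
  set p : ℝ := (s:ℝ) + m with hp'
  have hp : 0 < p := by positivity
  set D : ℕ → ℝ≥0∞ := fun n => EMetric.diam (t n) with hD
  have hDfin : ∀ n, D n ≠ ∞ := fun n =>
    ((hdiam n).trans_lt (hδ1.trans_lt ENNReal.one_lt_top)).ne
  set Dr : ℕ → ℝ := fun n => (D n).toReal with hDr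
  set c : ℕ → ℝ × (Fin m → ℝ) := fun n =>
    if h : (t n).Nonempty then h.some else (0, fun _ => 0) with hc'
  have hc : ∀ n, (t n).Nonempty → c n ∈ t n := by
    intro n hn; simp only [hc', dif_pos hn]; exact hn.some_mem
  set I : ℕ → Set ℝ := fun n => Metric.closedBall (c n).1 (Dr n) with hI
  set J : ℕ → Set (Fin m → ℝ) := fun n => Metric.closedBall (c n).2 (Dr n) with hJ
  set J' : ℕ → Set (Fin m → ℝ) := fun n => if (t n).Nonempty then J n else ∅ with hJ'
  have hJ'meas : ∀ n, MeasurableSet (J' n) := by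
    intro n; simp only [hJ']; split
    · exact measurableSet_closedBall
    · exact MeasurableSet.empty
  set F : ℕ → (Fin m → ℝ) → ℝ≥0∞ := fun n => (J' n).indicator fun _ => (2 * D n) ^ (s:ℝ)
    with hF
  have hFmeas : ∀ n, Measurable (F n) := fun n => measurable_const.indicator (hJ'meas n)
  set G : (Fin m → ℝ) → ℝ≥0∞ := fun y => ∑' n, F n y with hG
  set Vε : ℝ≥0∞ := (ENNReal.ofReal ε) ^ m with hVε
  have hQvol : volume Q = Vε := by
    rw [hQ, volume_pi_pi]
    simp [Real.volume_Icc, hVε]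
  have hVε0 : Vε ≠ 0 := pow_ne_zero _ (ENNReal.ofReal_pos.2 hε).ne'
  have hVεtop : Vε ≠ ∞ := by simp [hVε]
  have hdiamI : ∀ n, EMetric.diam (I n) ≤ 2 * D n := by
    intro n
    have : I n = EMetric.closedBall (c n).1 (ENNReal.ofReal (Dr n)) :=
      (Metric.emetric_closedBall ENNReal.toReal_nonneg).symm
    rw [this]
    calc EMetric.diam _ ≤ 2 * ENNReal.ofReal (Dr n) := EMetric.diam_closedBall
      _ = 2 * D n := by rw [hDr, ENNReal.ofReal_toReal (hDfin n)]
  -- integral bound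
  have hint : ∫⁻ y in Q, G y ≤ 2 ^ p * M := by
    have hterm : ∀ n, ∫⁻ y in Q, F n y ≤
        2 ^ p * ⨆ _ : (t n).Nonempty, D n ^ p := by
      intro n
      have : ∫⁻ y in Q, F n y = (2 * D n) ^ (s:ℝ) * volume (J' n ∩ Q) := by
        rw [hF, lintegral_indicator_const (hJ'meas n), Measure.restrict_apply (hJ'meas n)]
      rw [this]
      by_cases hne : (t n).Nonempty
      · have hJvol : volume (J n) ≤ (2 * D n) ^ (m:ℝ) := by
          have hsub : J n ⊆ Set.Icc (fun i => (c n).2 i - Dr n) (fun i => (c n).2 i + Dr n) := by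
            intro z hz
            rw [Set.mem_Icc]
            have hz' : dist z (c n).2 ≤ Dr n := hz
            constructor <;> intro i <;>
              · have := (dist_le_pi_dist z (c n).2 i).trans hz'
                rw [Real.dist_eq, abs_le] at this
                simp only []
                linarith [this.1, this.2]
          calc volume (J n) ≤ volume (Set.Icc _ _) := measure_mono hsub
            _ = ∏ _i : Fin m, ENNReal.ofReal ((Dr n) + (Dr n)) := by
                rw [Real.volume_Icc_pi]; congr 1; ext i; ring_nf
            _ = (ENNReal.ofReal (2 * Dr n)) ^ m := by
                rw [Finset.prod_const]; simp [two_mul, Finset.card_univ]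
            _ = (2 * D n) ^ m := by
                rw [ENNReal.ofReal_mul zero_le_two, ENNReal.ofReal_toReal (hDfin n)]
                norm_num
            _ = (2 * D n) ^ (m:ℝ) := (ENNReal.rpow_natCast _ m).symm
        have h1 : (2 * D n) ^ (s:ℝ) * volume (J' n ∩ Q) ≤
            (2 * D n) ^ (s:ℝ) * (2 * D n) ^ (m:ℝ) := by
          refine mul_le_mul_right ?_ _
          refine (measure_mono inter_subset_left).trans ?_
          simp only [J', if_pos hne]; exact hJvol
        refine h1.trans ?_
        rcases eq_or_ne (D n) 0 with h0 | h0
        · simp [h0, ENNReal.zero_rpow_of_pos (by exact_mod_cast hs : (0:ℝ) < (s:ℝ))]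
        · have hb0 : 2 * D n ≠ 0 := mul_ne_zero two_ne_zero h0
          have hbt : 2 * D n ≠ ∞ := ENNReal.mul_ne_top (by norm_num) (hDfin n)
          rw [← ENNReal.rpow_add _ _ hb0 hbt, ENNReal.mul_rpow_of_nonneg _ _ hp.le,
            iSup_pos hne]
      · have : J' n = ∅ := if_neg hne
        simp [this]
    calc ∫⁻ y in Q, G y = ∑' n, ∫⁻ y in Q, F n y :=
        lintegral_tsum fun n => (hFmeas n).aemeasurable
      _ ≤ ∑' n, 2 ^ p * ⨆ _ : (t n).Nonempty, D n ^ p := ENNReal.tsum_le_tsum hterm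
      _ = 2 ^ p * ∑' n, ⨆ _ : (t n).Nonempty, D n ^ p := ENNReal.tsum_mul_left
      _ ≤ 2 ^ p * M := mul_le_mul_right hsum _
  -- find a good slice
  have h2pM : 2 ^ p * M ≠ ∞ :=
    ENNReal.mul_ne_top (ENNReal.rpow_ne_top_of_nonneg hp.le (by norm_num)) hM
  obtain ⟨y, hyQ, hyG⟩ : ∃ y ∈ Q, G y ≤ 2 ^ p * M / Vε + 1 := by
    by_contra hy
    push_neg at hy
    have hmono : (2 ^ p * M / Vε + 1) * Vε ≤ ∫⁻ y in Q, G y := by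
      have := setLIntegral_const Q (2 ^ p * M / Vε + 1) (μ := volume)
      rw [hQvol] at this
      rw [← this]
      exact setLIntegral_mono (Measurable.ennreal_tsum hFmeas)
        fun x hx => (hy x hx).le
    have hcalc : (2 ^ p * M / Vε + 1) * Vε = 2 ^ p * M + Vε := by
      rw [add_mul, one_mul, ENNReal.div_mul_cancel hVε0 hVεtop]
    rw [hcalc] at hmono
    have : Vε ≤ 0 := by
      have h := hmono.trans hint
      rwa [← add_zero (2 ^ p * M), add_assoc, zero_add,
        ENNReal.add_le_add_iff_left h2pM] at h
    exact hVε0 (le_antisymm this zero_le)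
  -- build the cover of A
  refine ⟨fun n => if h : (t n).Nonempty ∧ y ∈ J n then I n else ∅, ?_, ?_, ?_⟩
  · intro x hx
    have hxy : (x, y) ∈ A ×ˢ Q := ⟨hx, hyQ⟩
    obtain ⟨n, hn⟩ : ∃ n, (x, y) ∈ t n := by
      simpa using hcov hxy
    have hne : (t n).Nonempty := ⟨(x, y), hn⟩
    have hed := EMetric.edist_le_diam_of_mem hn (hc n hne)
    rw [Prod.edist_eq, max_le_iff] at hed
    have hx1 : x ∈ I n := by
      rw [hI, Metric.mem_closedBall, dist_edist]
      exact ENNReal.toReal_mono (hDfin n) hed.1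
    have hy1 : y ∈ J n := by
      rw [hJ, Metric.mem_closedBall, dist_edist]
      exact ENNReal.toReal_mono (hDfin n) hed.2
    exact mem_iUnion.2 ⟨n, by rw [dif_pos ⟨hne, hy1⟩]; exact hx1⟩
  · intro n
    by_cases h : (t n).Nonempty ∧ y ∈ J n
    · simp only [dif_pos h]
      exact (hdiamI n).trans (mul_le_mul_right (hdiam n) _)
    · simp only [dif_neg h]
      exact (EMetric.diam_empty (X := ℝ)).le.trans zero_le
  · refine le_trans ?_ hyG
    refine ENNReal.tsum_le_tsum fun n => ?_
    by_cases h : (t n).Nonempty ∧ y ∈ J n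
    · simp only [dif_pos h]
      have h1 : EMetric.diam (I n) ^ (s:ℝ) ≤ (2 * D n) ^ (s:ℝ) :=
        ENNReal.rpow_le_rpow (hdiamI n) (by positivity)
      have h2 : F n y = (2 * D n) ^ (s:ℝ) := by
        rw [hF]
        have : y ∈ J' n := by simp only [J', if_pos h.1]; exact h.2
        exact indicator_of_mem this _
      rw [h2]; exact h1
    · simp only [dif_neg h]
      have h0 : EMetric.diam (∅ : Set ℝ) ^ (s:ℝ) = 0 := by
        rw [show EMetric.diam (∅ : Set ℝ) = 0 from Metric.ediam_empty, ENNReal.zero_rpow_of_pos (by exact_mod_cast hs : (0:ℝ) < (s:ℝ))]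
      exact h0.le.trans zero_le

lemma prod_cube_hausdorff {m : ℕ} (s : ℝ≥0) (hs : 0 < s) (A : Set ℝ) {ε : ℝ} (hε : 0 < ε)
    (hA : μH[(s:ℝ)] A = ∞) :
    μH[((s:ℝ) + m)] (A ×ˢ (univ.pi fun _ : Fin m => Icc (0:ℝ) ε)) = ∞ := by
  by_contra hP
  set P : Set (ℝ × (Fin m → ℝ)) := A ×ˢ (univ.pi fun _ : Fin m => Icc (0:ℝ) ε) with hPdef
  set p : ℝ := (s:ℝ) + m with hp'
  set M : ℝ≥0∞ := μH[p] P + 1 with hM'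
  have hM : M ≠ ∞ := ENNReal.add_ne_top.2 ⟨hP, ENNReal.one_ne_top⟩
  set B : ℝ≥0∞ := 2 ^ p * M / (ENNReal.ofReal ε) ^ m + 1 with hB'
  have hB : B ≠ ∞ := by
    have h1 : 2 ^ p * M ≠ ∞ :=
      ENNReal.mul_ne_top (ENNReal.rpow_ne_top_of_nonneg (by positivity) (by norm_num)) hM
    have h2 : (ENNReal.ofReal ε) ^ m ≠ 0 := pow_ne_zero _ (ENNReal.ofReal_pos.2 hε).ne'
    refine ENNReal.add_ne_top.2 ⟨?_, ENNReal.one_ne_top⟩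
    simp [ENNReal.div_eq_top, h1, h2]
  have key : ∀ k : ℕ, ∃ u : ℕ → Set ℝ, A ⊆ ⋃ n, u n ∧
      (∀ n, EMetric.diam (u n) ≤ 2 * ((k : ℝ≥0∞) + 1)⁻¹) ∧
      ∑' n, EMetric.diam (u n) ^ (s:ℝ) ≤ B := by
    intro k
    set δ : ℝ≥0∞ := ((k : ℝ≥0∞) + 1)⁻¹ with hδ'
    have hδpos : 0 < δ := ENNReal.inv_pos.2 (by simp)
    have hδ1 : δ ≤ 1 := by
      rw [hδ', ENNReal.inv_le_one]
      exact le_add_self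
    have hlt : (⨅ (t : ℕ → Set (ℝ × (Fin m → ℝ))) (_ : P ⊆ ⋃ n, t n)
        (_ : ∀ n, EMetric.diam (t n) ≤ δ),
        ∑' n, ⨆ _ : (t n).Nonempty, EMetric.diam (t n) ^ p) < M := by
      refine lt_of_le_of_lt ?_ (ENNReal.lt_add_right hP one_ne_zero)
      have h := le_iSup₂ (f := fun (r : ℝ≥0∞) (_ : 0 < r) =>
        ⨅ (t : ℕ → Set (ℝ × (Fin m → ℝ))) (_ : P ⊆ ⋃ n, t n)
          (_ : ∀ n, EMetric.diam (t n) ≤ r),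
          ∑' n, ⨆ _ : (t n).Nonempty, EMetric.diam (t n) ^ p) δ hδpos
      rw [hausdorffMeasure_apply]; exact h
    simp only [iInf_lt_iff] at hlt
    obtain ⟨t, hcov, hdiam, hsum⟩ := hlt
    exact slice_cover s hs A hε M hM hδ1 t hcov hdiam hsum.le
  choose u hu1 hu2 hu3 using key
  have htend : Tendsto (fun k : ℕ => 2 * ((k : ℝ≥0∞) + 1)⁻¹) atTop (𝓝 0) := by
    have h1 : Tendsto (fun k : ℕ => ((k : ℝ≥0∞))⁻¹) atTop (𝓝 0) :=
      ENNReal.tendsto_inv_nat_nhds_zero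
    have h2 : Tendsto (fun k : ℕ => ((k : ℝ≥0∞) + 1)⁻¹) atTop (𝓝 0) := by
      have heq : (fun k : ℕ => ((k : ℝ≥0∞) + 1)⁻¹)
          = (fun k : ℕ => ((k : ℝ≥0∞))⁻¹) ∘ (fun a : ℕ => a + 1) := by
        funext k
        simp only [Function.comp_apply]
        push_cast
        ring_nf
      rw [heq]
      exact h1.comp (tendsto_add_atTop_nat 1)
    have := ENNReal.Tendsto.const_mul h2 (Or.inr (by norm_num : (2:ℝ≥0∞) ≠ ∞))
    simpa using this
  have hle := hausdorffMeasure_le_liminf_tsum (s:ℝ) A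
    (fun k : ℕ => 2 * ((k : ℝ≥0∞) + 1)⁻¹) htend u
    (Eventually.of_forall hu2) (Eventually.of_forall hu1)
  have hliminf : liminf (fun k => ∑' n, EMetric.diam (u k n) ^ (s:ℝ)) atTop ≤ B :=
    liminf_le_of_frequently_le' (Frequently.of_forall hu3)
  rw [hA] at hle
  exact hB (top_le_iff.1 (hle.trans hliminf))

lemma euclid_coord_dist_le {n : ℕ} (x y : EuclideanSpace ℝ (Fin n)) (j : Fin n) :
    dist (x j) (y j) ≤ dist x y := by
  rw [EuclideanSpace.dist_eq]
  rw [show dist (x j) (y j) = Real.sqrt (dist (x j) (y j) ^ 2) from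
    (Real.sqrt_sq dist_nonneg).symm]
  exact Real.sqrt_le_sqrt (Finset.single_le_sum (f := fun i => dist (x i) (y i) ^ 2)
    (fun i _ => sq_nonneg _) (Finset.mem_univ j))

/-- **A full-dimensional set with a pinned distance set of measure zero.**
Let `y₀ ∈ ℝ^d` (`d ≥ 2`) and let `A ⊆ (0,∞)` be compact with `dim_H A = 1` and Lebesgue
measure zero. Then `E = {x : |x - y₀| ∈ A}` has full Hausdorff dimension `d`, while its
pinned distance set at `y₀` is contained in `A` and hence has Lebesgue measure zero. -/
theorem full_dimension_pinned_measure_zero_example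
    (d : ℕ) (hd : 2 ≤ d) (y₀ : EuclideanSpace ℝ (Fin d))
    (A : Set ℝ) (hAc : IsCompact A) (hApos : A ⊆ Set.Ioi (0 : ℝ))
    (hAdim : dimH A = 1) (hAvol : volume A = 0)
    (E : Set (EuclideanSpace ℝ (Fin d)))
    (hE : E = {x : EuclideanSpace ℝ (Fin d) | dist x y₀ ∈ A}) :
    dimH E = (d : ℝ≥0∞) ∧
    (fun x => dist x y₀) '' E ⊆ A ∧
    volume ((fun x => dist x y₀) '' E) = 0 := by
  obtain ⟨m, rfl⟩ : ∃ m, d = m + 1 := ⟨d - 1, by omega⟩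
  have himg : (fun x => dist x y₀) '' E ⊆ A := by
    rintro _ ⟨x, hx, rfl⟩
    rw [hE] at hx
    exact hx
  refine ⟨?_, himg, le_antisymm ((measure_mono himg).trans hAvol.le) zero_le⟩
  -- A is nonempty with positive infimum
  have hAne : A.Nonempty := by
    by_contra h
    rw [not_nonempty_iff_eq_empty] at h
    rw [h, dimH_empty] at hAdim
    exact zero_ne_one hAdim
  set a : ℝ := sInf A with ha'
  have haA : a ∈ A := hAc.sInf_mem hAne
  have hapos : 0 < a := hApos haA
  have halb : ∀ r ∈ A, a ≤ r := fun r hr => csInf_le hAc.bddBelow hr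
  set ε : ℝ := a / (m + 1) with hε'
  have hε : 0 < ε := by positivity
  set Q : Set (Fin m → ℝ) := univ.pi fun _ : Fin m => Icc (0:ℝ) ε with hQ'
  set P : Set (ℝ × (Fin m → ℝ)) := A ×ˢ Q with hP'
  -- sum of squares bound on Q
  have hQS : ∀ v ∈ Q, (∑ i, v i ^ 2) ≤ a ^ 2 := by
    intro v hv
    have h1 : ∀ i, v i ∈ Icc (0:ℝ) ε := fun i => hv i (mem_univ i)
    have h2 : (∑ i, v i ^ 2) ≤ ∑ _i : Fin m, ε ^ 2 := by
      refine Finset.sum_le_sum fun i _ => ?_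
      exact pow_le_pow_left₀ (h1 i).1 (h1 i).2 2
    rw [Finset.sum_const, Finset.card_univ, Fintype.card_fin, nsmul_eq_mul] at h2
    refine h2.trans ?_
    have hm : (0:ℝ) < ((m:ℝ)+1)^2 := by positivity
    rw [hε', div_pow, ← mul_div_assoc, div_le_iff₀ hm]
    have hm0 : (0:ℝ) ≤ m := Nat.cast_nonneg m
    nlinarith [sq_nonneg a, mul_nonneg hm0 (sq_nonneg a),
      mul_nonneg (mul_nonneg hm0 hm0) (sq_nonneg a)]
  -- the chart
  set g : ℝ × (Fin m → ℝ) → EuclideanSpace ℝ (Fin (m+1)) := fun q =>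
    y₀ + (WithLp.equiv 2 (∀ _ : Fin (m+1), ℝ)).symm
      (Fin.cons (Real.sqrt (q.1 ^ 2 - ∑ i, q.2 i ^ 2)) q.2) with hg'
  have hgdist : ∀ r (v : Fin m → ℝ), 0 < r → (∑ i, v i ^ 2) ≤ r ^ 2 →
      dist (g (r, v)) y₀ = r := by
    intro r v hr hS
    rw [hg']
    simp only []
    rw [dist_eq_norm, add_sub_cancel_left, EuclideanSpace.norm_eq]
    have hsum : ∑ j : Fin (m+1),
        ‖((WithLp.equiv 2 (∀ _ : Fin (m+1), ℝ)).symm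
          (Fin.cons (Real.sqrt (r ^ 2 - ∑ i, v i ^ 2)) v)) j‖ ^ 2 = r ^ 2 := by
      simp only [WithLp.equiv_symm_apply, PiLp.toLp_apply, WithLp.ofLp_toLp, Real.norm_eq_abs, sq_abs]
      rw [Fin.sum_univ_succ]
      simp only [Fin.cons_zero, Fin.cons_succ]
      rw [Real.sq_sqrt (by linarith)]
      ring
    rw [hsum, Real.sqrt_sq hr.le]
  have hanti : ∀ q q' : ℝ × (Fin m → ℝ), q ∈ P → q' ∈ P →
      dist q q' ≤ dist (g q) (g q') := by
    rintro ⟨r, v⟩ ⟨r', v'⟩ ⟨hr, hv⟩ ⟨hr', hv'⟩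
    have hd1 : dist (g (r, v)) y₀ = r :=
      hgdist r v (hApos hr) ((hQS v hv).trans (by nlinarith [halb r hr, hapos]))
    have hd2 : dist (g (r', v')) y₀ = r' :=
      hgdist r' v' (hApos hr') ((hQS v' hv').trans (by nlinarith [halb r' hr', hapos]))
    rw [Prod.dist_eq]
    refine max_le ?_ ?_
    · rw [Real.dist_eq]
      calc |r - r'| = |dist (g (r, v)) y₀ - dist (g (r', v')) y₀| := by rw [hd1, hd2]
        _ ≤ dist (g (r, v)) (g (r', v')) := abs_dist_sub_le _ _ _
    · refine (dist_pi_le_iff dist_nonneg).2 fun i => ?_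
      have hcomp : ∀ (w : ℝ) (z : Fin m → ℝ), (g (w, z)) i.succ = y₀ i.succ + z i := by
        intro w z
        rw [hg']
        simp only [PiLp.add_apply, WithLp.equiv_symm_apply, PiLp.toLp_apply, WithLp.ofLp_toLp, Fin.cons_succ]
      calc dist (v i) (v' i)
          = dist ((g (r, v)) i.succ) ((g (r', v')) i.succ) := by
            rw [hcomp, hcomp, Real.dist_eq, Real.dist_eq, add_sub_add_left_eq_sub]
        _ ≤ dist (g (r, v)) (g (r', v')) := euclid_coord_dist_le _ _ _
  -- key dimension bound
  have key : ∀ s : ℝ≥0, 0 < s → s < 1 → (s : ℝ≥0∞) + m ≤ dimH E := by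
    intro s hs0 hs1
    have hμA : μH[(s:ℝ)] A = ∞ :=
      hausdorffMeasure_of_lt_dimH (by rw [hAdim]; exact_mod_cast hs1)
    have hμP : μH[((s:ℝ) + m)] P = ∞ := prod_cube_hausdorff s hs0 A hε hμA
    set p : ℝ := (s:ℝ) + m with hp'
    have hp0 : 0 ≤ p := by positivity
    set G : ↥P → EuclideanSpace ℝ (Fin (m+1)) := fun q => g q with hG'
    have hGanti : AntilipschitzWith 1 G := by
      rw [antilipschitzWith_iff_le_mul_dist]
      intro x y
      rw [NNReal.coe_one, one_mul]
      exact hanti _ _ x.2 y.2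
    have h1 : μH[p] P = μH[p] (univ : Set ↥P) := by
      conv_lhs => rw [← Subtype.coe_image_univ P]
      exact isometry_subtype_coe.hausdorffMeasure_image (Or.inl hp0) univ
    have h2 : μH[p] (univ : Set ↥P) ≤ 1 ^ p * μH[p] (G '' univ) :=
      hGanti.le_hausdorffMeasure_image hp0 univ
    have h3 : G '' univ ⊆ E := by
      rintro _ ⟨⟨⟨r, v⟩, hq⟩, -, rfl⟩
      rw [hE]
      have : dist (g (r, v)) y₀ = r :=
        hgdist r v (hApos hq.1) ((hQS v hq.2).trans
          (by nlinarith [halb r hq.1, hapos]))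
      simpa [hG', this] using hq.1
    have hμE : μH[p] E = ∞ := by
      refine top_le_iff.1 ?_
      calc (⊤ : ℝ≥0∞) = μH[p] P := hμP.symm
        _ = μH[p] (univ : Set ↥P) := h1
        _ ≤ 1 ^ p * μH[p] (G '' univ) := h2
        _ = μH[p] (G '' univ) := by rw [ENNReal.one_rpow, one_mul]
        _ ≤ μH[p] E := measure_mono h3
    have := le_dimH_of_hausdorffMeasure_eq_top
      (d := s + (m : ℝ≥0)) (s := E) (by push_cast; exact hμE)
    push_cast at this
    exact this
  -- conclude
  refine le_antisymm ?_ ?_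
  · calc dimH E ≤ dimH (univ : Set (EuclideanSpace ℝ (Fin (m+1)))) :=
        dimH_mono (subset_univ E)
      _ = (Module.finrank ℝ (EuclideanSpace ℝ (Fin (m+1))) : ℝ≥0∞) :=
        Real.dimH_univ_eq_finrank _
      _ = ((m + 1 : ℕ) : ℝ≥0∞) := by rw [finrank_euclideanSpace_fin]
  · refine ENNReal.le_of_forall_pos_le_add fun η hη _ => ?_
    by_cases hcase : (1:ℝ≥0) ≤ η
    · have h := key 2⁻¹ (by exact_mod_cast (by norm_num : (0:ℝ) < 2⁻¹))
        (by exact_mod_cast (by norm_num : (2⁻¹:ℝ) < 1))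
      have hhalf : ((2⁻¹ : ℝ≥0) : ℝ≥0∞) = 2⁻¹ := by
        simp
      rw [hhalf] at h
      have harith : ((m + 1 : ℕ) : ℝ≥0∞) ≤ (2⁻¹ : ℝ≥0∞) + m + η := by
        push_cast
        calc (m : ℝ≥0∞) + 1 ≤ (m : ℝ≥0∞) + (2⁻¹ + 1) := by
              gcongr; exact le_add_self
          _ = (2⁻¹ : ℝ≥0∞) + m + 1 := by ring
          _ ≤ (2⁻¹ : ℝ≥0∞) + m + η := by
              gcongr
              exact_mod_cast hcase
      refine harith.trans ?_
      gcongr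
    · push_neg at hcase
      set σ : ℝ≥0 := 1 - η / 2 with hσ'
      have hη2 : η / 2 < 1 := lt_of_le_of_lt (half_le_self zero_le) hcase
      have hσ0 : 0 < σ := tsub_pos_of_lt hη2
      have hσ1 : σ < 1 := tsub_lt_self one_pos (by positivity)
      have h := key σ hσ0 hσ1
      have harith : (1:ℝ≥0) ≤ σ + η := by
        calc (1:ℝ≥0) = 1 - η/2 + η/2 := (tsub_add_cancel_of_le hη2.le).symm
          _ ≤ σ + η := add_le_add le_rfl (half_le_self zero_le)
      calc ((m + 1 : ℕ) : ℝ≥0∞) = (m : ℝ≥0∞) + 1 := by push_cast; ring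
        _ ≤ (m : ℝ≥0∞) + ((σ : ℝ≥0∞) + (η : ℝ≥0∞)) := by
            gcongr
            exact_mod_cast harith
        _ = ((σ : ℝ≥0∞) + m) + η := by ring
        _ ≤ dimH E + η := by gcongr
end

section
/- Let d = 2k + 1 be odd with k ≥ 1, and define the Minkowski-type quadratic function Φ(x,y) = Σ_{i=1}^{d} (-1)^{i+1} (x_i - y_i)² on ℝ^d × ℝ^d. Let A ⊂ ℝ be a Borel set with dim_H(A) = 1 and one-dimensional Lebesgue measure zero, and set E = {(a, t₁, t₁, t₂, t₂, …, t_k, t_k) : a ∈ A, t₁, …, t_k ∈ ℝ} ⊂ ℝ^d and W = {y ∈ ℝ^d : y_{2j} = y_{2j+1} for all 1 ≤ j ≤ k}. Then dim_H(E) = (d+1)/2, W is a linear subspace of dimension (d+1)/2, and for every y ∈ W the pinned set Δ_Φ^y(E) = {Φ(x,y) : x ∈ E} has one-dimensional Lebesgue measure zero; in particular dim_H({y ∈ ℝ^d : Δ_Φ^y(E) has Lebesgue measure zero}) ≥ (d+1)/2. -/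
open MeasureTheory
open scoped ENNReal

open EMetric Set
open scoped NNReal

lemma aux_sup_nonempty {X : Type*} [EMetricSpace X] (t : Set X) {p : ℝ} (hp : 0 < p) :
    (⨆ _ : t.Nonempty, diam t ^ p) = diam t ^ p := by
  rcases t.eq_empty_or_nonempty with h | h
  · rw [h]
    simp [EMetric.diam, ENNReal.zero_rpow_of_pos hp, Set.not_nonempty_empty]
  · exact iSup_pos h

lemma hausdorff_slice {k : ℕ} {s : ℝ≥0} (hs : 0 < s) (A : Set ℝ) :
    μH[(s : ℝ)] A ≤ μH[(s : ℝ) + k] (A ×ˢ (Icc (0 : Fin k → ℝ) 1)) := by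
  classical
  have hsk : (0:ℝ) < (s : ℝ) + k := by positivity
  rw [Measure.hausdorffMeasure_apply, Measure.hausdorffMeasure_apply]
  refine iSup₂_le fun r hr => le_iSup₂_of_le r hr ?_
  refine le_iInf fun t => le_iInf fun htA => le_iInf fun htr => ?_
  set Q : Set (Fin k → ℝ) := Icc 0 1 with hQdef
  set G : ℕ → Set (Fin k → ℝ) := fun n => closure (Prod.snd '' t n) with hG
  set c : ℕ → ℝ≥0∞ := fun n => diam (t n) ^ (s : ℝ) with hc
  set g : (Fin k → ℝ) → ℝ≥0∞ := fun y => ∑' n, (G n).indicator (fun _ => c n) y with hg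
  have hGmeas : ∀ n, MeasurableSet (G n) := fun n => measurableSet_closure
  have key : ∀ y ∈ Q,
      (⨅ (u : ℕ → Set ℝ) (_ : A ⊆ ⋃ n, u n) (_ : ∀ n, diam (u n) ≤ r),
        ∑' n, ⨆ _ : (u n).Nonempty, diam (u n) ^ (s : ℝ)) ≤ g y := by
    intro y hy
    set u : ℕ → Set ℝ := fun n => if y ∈ G n then Prod.fst '' t n else ∅ with hu
    have hcov : A ⊆ ⋃ n, u n := by
      intro a ha
      obtain ⟨n, hn⟩ := mem_iUnion.1 (htA (show (a, y) ∈ A ×ˢ Q from ⟨ha, hy⟩))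
      have hyG : y ∈ G n := subset_closure ⟨(a, y), hn, rfl⟩
      exact mem_iUnion.2 ⟨n, by simp only [hu, if_pos hyG]; exact ⟨(a, y), hn, rfl⟩⟩
    have hdiamu : ∀ n, diam (u n) ≤ r := by
      intro n
      by_cases h : y ∈ G n
      · simp only [hu, if_pos h]
        exact le_trans (by simpa [EMetric.diam] using (LipschitzWith.prod_fst).ediam_image_le (t n)) (htr n)
      · simp [hu, if_neg h, EMetric.diam]
    refine le_trans (iInf_le_of_le u (iInf_le_of_le hcov (iInf_le_of_le hdiamu le_rfl))) ?_
    refine ENNReal.tsum_le_tsum fun n => ?_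
    by_cases h : y ∈ G n
    · rw [indicator_of_mem h]
      refine iSup_le fun _ => ?_
      simp only [hu, if_pos h]
      exact ENNReal.rpow_le_rpow
        (by simpa [EMetric.diam] using (LipschitzWith.prod_fst).ediam_image_le (t n)) s.coe_nonneg
    · simp [hu, if_neg h, indicator_of_notMem h]
  have hgmeas : Measurable g :=
    Measurable.ennreal_tsum fun n => measurable_const.indicator (hGmeas n)
  have intbound : ∫⁻ y in Q, g y ≤
      ∑' n, ⨆ _ : (t n).Nonempty, diam (t n) ^ ((s : ℝ) + k) := by
    rw [hg]
    rw [lintegral_tsum fun n => (measurable_const.indicator (hGmeas n)).aemeasurable]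
    refine ENNReal.tsum_le_tsum fun n => ?_
    rw [aux_sup_nonempty _ hsk]
    rw [lintegral_indicator (hGmeas n) _, setLIntegral_const,
      Measure.restrict_apply (hGmeas n)]
    calc c n * volume (G n ∩ Q) ≤ c n * volume (G n) := by
          gcongr; exact inter_subset_left
      _ ≤ diam (t n) ^ (s : ℝ) * diam (t n) ^ (k : ℕ) := by
          refine mul_le_mul_right ?_ _
          refine le_trans (Real.volume_pi_le_diam_pow (G n)) ?_
          rw [Fintype.card_fin]
          refine pow_le_pow_left' ?_ k
          rw [hG]
          simpa [EMetric.diam, EMetric.diam_closure] using (LipschitzWith.prod_snd).ediam_image_le (t n)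
      _ = diam (t n) ^ ((s : ℝ) + k) := by
          rw [← ENNReal.rpow_natCast (diam (t n)) k,
            ← ENNReal.rpow_add_of_nonneg _ _ s.coe_nonneg (by positivity)]
  have hQvol : volume Q = 1 := by
    rw [hQdef, Real.volume_Icc_pi]
    simp
  calc (⨅ (u : ℕ → Set ℝ) (_ : A ⊆ ⋃ n, u n) (_ : ∀ n, diam (u n) ≤ r),
        ∑' n, ⨆ _ : (u n).Nonempty, diam (u n) ^ (s : ℝ))
      = ∫⁻ _ in Q, (⨅ (u : ℕ → Set ℝ) (_ : A ⊆ ⋃ n, u n) (_ : ∀ n, diam (u n) ≤ r),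
        ∑' n, ⨆ _ : (u n).Nonempty, diam (u n) ^ (s : ℝ)) := by
        rw [setLIntegral_const, hQvol, mul_one]
    _ ≤ ∫⁻ y in Q, g y := setLIntegral_mono hgmeas key
    _ ≤ _ := intbound

lemma dimH_prod_ge {k : ℕ} (A : Set ℝ) (hAdim : dimH A = 1) :
    (1 + k : ℝ≥0∞) ≤ dimH (A ×ˢ (univ : Set (Fin k → ℝ))) := by
  by_contra hlt
  push_neg at hlt
  obtain ⟨s', hs'1, hs'2⟩ := ENNReal.lt_iff_exists_nnreal_btwn.1 hlt
  have hs'k : s' < 1 + (k : ℝ≥0) := by exact_mod_cast hs'2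
  set s : ℝ≥0 := max (1 / 2) (s' - k) with hsdef
  have hs0 : 0 < s := lt_of_lt_of_le (by norm_num) (le_max_left _ _)
  have hs1 : s < 1 := by
    refine max_lt (by exact_mod_cast (by norm_num : (1/2:ℝ) < 1)) ?_
    rcases le_total s' k with h | h
    · have : s' - (k : ℝ≥0) = 0 := tsub_eq_zero_of_le h
      rw [this]; norm_num
    · rw [tsub_lt_iff_left h]
      rwa [add_comm] at hs'k
  have hμA : μH[(s : ℝ)] A = ∞ :=
    hausdorffMeasure_of_lt_dimH (by rw [hAdim]; exact_mod_cast hs1)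
  have h2 := hausdorff_slice hs0 A (k := k)
  rw [hμA, top_le_iff] at h2
  have h3 : μH[((s + k : ℝ≥0) : ℝ)] (A ×ˢ (Icc (0 : Fin k → ℝ) 1)) = ∞ := by
    convert h2 using 2; simp
  have h4 : ((s + k : ℝ≥0) : ℝ≥0∞) ≤ dimH (A ×ˢ (univ : Set (Fin k → ℝ))) :=
    le_trans (le_dimH_of_hausdorffMeasure_eq_top h3)
      (dimH_mono (prod_mono subset_rfl (subset_univ _)))
  have h5 : (s' : ℝ≥0∞) ≤ ((s + k : ℝ≥0) : ℝ≥0∞) := by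
    rw [ENNReal.coe_le_coe]
    rcases le_total s' k with h | h
    · exact le_trans h (le_add_self)
    · calc s' = s' - k + k := (tsub_add_cancel_of_le h).symm
        _ ≤ s + k := add_le_add (le_max_right _ _) le_rfl
  exact absurd (h5.trans h4) (not_le.2 hs'1)

lemma null_image_sq {A : Set ℝ} (hAvol : volume A = 0) (c : ℝ) :
    volume ((fun a => (a - c) ^ 2) '' A) = 0 := by
  have hA : A = ⋃ n : ℕ, A ∩ Icc (-(n : ℝ)) n := by
    ext a
    simp only [mem_iUnion, mem_inter_iff, mem_Icc]
    constructor
    · intro ha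
      have h1 := Nat.le_ceil |a|
      obtain ⟨l, r⟩ := abs_le.1 (le_of_eq (rfl : |a| = |a|))
      exact ⟨⌈|a|⌉₊, ha, by linarith, by linarith⟩
    · rintro ⟨n, h, _⟩; exact h
  rw [hA, image_iUnion]
  refine measure_iUnion_null fun n => ?_
  set K : ℝ≥0 := ⟨2 * n + 2 * |c|, by positivity⟩ with hK
  have hlip : LipschitzOnWith K (fun a => (a - c) ^ 2) (A ∩ Icc (-(n : ℝ)) n) := by
    refine LipschitzOnWith.of_dist_le_mul fun a ha b hb => ?_
    have ha' := ha.2; have hb' := hb.2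
    rw [mem_Icc] at ha' hb'
    rw [Real.dist_eq, Real.dist_eq]
    have : (a - c) ^ 2 - (b - c) ^ 2 = (a - b) * (a + b - 2 * c) := by ring
    rw [this, abs_mul, mul_comm]
    have habs : |a + b - 2 * c| ≤ (K : ℝ) := by
      rw [hK]
      have h1 : |a| ≤ n := abs_le.2 ⟨ha'.1, ha'.2⟩
      have h2 : |b| ≤ n := abs_le.2 ⟨hb'.1, hb'.2⟩
      calc |a + b - 2 * c| ≤ |a| + |b| + 2 * |c| := by
            calc |a + b - 2 * c| ≤ |a + b| + |2 * c| := abs_sub _ _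
              _ ≤ |a| + |b| + |2 * c| := by gcongr; exact abs_add_le _ _
              _ = |a| + |b| + 2 * |c| := by rw [abs_mul]; norm_num
        _ ≤ 2 * n + 2 * |c| := by push_cast; linarith
    exact mul_le_mul_of_nonneg_right habs (abs_nonneg _)
  have h1 := hlip.hausdorffMeasure_image_le (zero_le_one (α := ℝ))
  rw [MeasureTheory.hausdorffMeasure_real] at h1
  have h2 : volume (A ∩ Icc (-(n : ℝ)) n) = 0 :=
    measure_mono_null inter_subset_left hAvol
  rw [h2, mul_zero] at h1
  exact le_antisymm h1 (zero_le)

lemma sum_cancel_pairs (k : ℕ) (g : ℕ → ℝ) (hg : ∀ j < k, g (2 * j + 1) + g (2 * j + 2) = 0) :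
    ∑ i ∈ Finset.range (2 * k + 1), g i = g 0 := by
  induction k with
  | zero => simp
  | succ n ih =>
    have h1 : 2 * (n + 1) + 1 = (2 * n + 1) + 1 + 1 := by ring
    rw [h1, Finset.sum_range_succ, Finset.sum_range_succ,
      ih fun j hj => hg j (by omega)]
    have h2 := hg n (by omega)
    have e : 2 * n + 1 + 1 = 2 * n + 2 := by omega
    rw [e]
    linarith

noncomputable def Lmap (k : ℕ) : (ℝ × (Fin k → ℝ)) →ₗ[ℝ] EuclideanSpace ℝ (Fin (2 * k + 1)) where
  toFun p := WithLp.toLp 2 (fun i => if h : (i : ℕ) = 0 then p.1 else p.2 ⟨((i : ℕ) - 1) / 2, by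
    have := i.isLt; omega⟩)
  map_add' p q := by
    ext i
    by_cases h : i = 0 <;> simp [h]
  map_smul' c p := by
    ext i
    by_cases h : i = 0 <;> simp [h]

lemma Lmap_zero {k : ℕ} (p : ℝ × (Fin k → ℝ)) (h : 0 < 2 * k + 1) :
    Lmap k p ⟨0, h⟩ = p.1 := by simp [Lmap]

lemma Lmap_ne_zero {k : ℕ} (p : ℝ × (Fin k → ℝ)) (i : Fin (2 * k + 1)) (h : (i : ℕ) ≠ 0) :
    Lmap k p i = p.2 ⟨((i : ℕ) - 1) / 2, by have := i.isLt; omega⟩ := by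
  simp [Lmap, h, show i ≠ 0 from fun e => h (by simp [e])]

lemma Lmap_odd {k : ℕ} (p : ℝ × (Fin k → ℝ)) (j : ℕ) (hj : j < k) (h : 2 * j + 1 < 2 * k + 1) :
    Lmap k p ⟨2 * j + 1, h⟩ = p.2 ⟨j, hj⟩ := by
  rw [Lmap_ne_zero p ⟨2 * j + 1, h⟩ (by simp)]
  exact congrArg p.2 (Fin.ext (show (2 * j + 1 - 1) / 2 = j by omega))

lemma Lmap_even {k : ℕ} (p : ℝ × (Fin k → ℝ)) (j : ℕ) (hj : j < k) (h : 2 * j + 2 < 2 * k + 1) :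
    Lmap k p ⟨2 * j + 2, h⟩ = p.2 ⟨j, hj⟩ := by
  rw [Lmap_ne_zero p ⟨2 * j + 2, h⟩ (by simp)]
  exact congrArg p.2 (Fin.ext (show (2 * j + 2 - 1) / 2 = j by omega))

lemma Lmap_inj (k : ℕ) : Function.Injective (Lmap k) := by
  rw [← LinearMap.ker_eq_bot]
  rw [LinearMap.ker_eq_bot']
  intro p hp
  have h0 : p.1 = 0 := by
    have := congrFun (congrArg WithLp.ofLp hp) ⟨0, by omega⟩
    rwa [Lmap_zero] at this
  have h2 : p.2 = 0 := by
    funext j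
    have := congrFun (congrArg WithLp.ofLp hp) ⟨2 * (j : ℕ) + 1, by have := j.isLt; omega⟩
    rw [Lmap_odd p j j.isLt] at this
    simpa using this
  exact Prod.ext h0 h2

lemma Lmap_section {k : ℕ} (x : EuclideanSpace ℝ (Fin (2 * k + 1)))
    (hx : ∀ j : Fin k, x ⟨2 * (j : ℕ) + 1, by have := j.isLt; omega⟩
      = x ⟨2 * (j : ℕ) + 2, by have := j.isLt; omega⟩) :
    Lmap k (x ⟨0, by omega⟩,
      fun j => x ⟨2 * (j : ℕ) + 1, by have := j.isLt; omega⟩) = x := by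
  ext i
  by_cases h0 : (i : ℕ) = 0
  · have hi : i = ⟨0, by omega⟩ := Fin.ext h0
    rw [hi, Lmap_zero]
  · rw [Lmap_ne_zero _ i h0]
    have hik := i.isLt
    have hj : ((i : ℕ) - 1) / 2 < k := by omega
    rcases Nat.even_or_odd (i : ℕ) with he | ho
    · rw [Nat.even_iff] at he
      have h2 : x ⟨2 * (((i : ℕ) - 1) / 2) + 1, by omega⟩
          = x ⟨2 * (((i : ℕ) - 1) / 2) + 2, by omega⟩ := hx ⟨((i : ℕ) - 1) / 2, hj⟩
      refine Eq.trans h2 (congrArg x (Fin.ext ?_))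
      show 2 * (((i : ℕ) - 1) / 2) + 2 = (i : ℕ)
      omega
    · rw [Nat.odd_iff] at ho
      refine congrArg x (Fin.ext ?_)
      show 2 * (((i : ℕ) - 1) / 2) + 1 = (i : ℕ)
      omega


/-- **Odd-dimensional Minkowski-distance counterexample.**
Let `d = 2k + 1` (`k ≥ 1`) and `Φ(x,y) = Σᵢ (-1)^{i+1} (xᵢ - yᵢ)²` (indices `1,…,d`;
with `0`-based indexing the sign is `(-1)^i`). Let `A ⊆ ℝ` be Borel with `dim_H A = 1`
and Lebesgue measure zero, let
`E = {(a, t₁, t₁, …, t_k, t_k) : a ∈ A, tᵢ ∈ ℝ}` and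
`W = {y : y_{2j} = y_{2j+1} for 1 ≤ j ≤ k}` (1-based indices). Then
`dim_H E = (d+1)/2`, `W` is a linear subspace of dimension `(d+1)/2`, for every `y ∈ W`
the pinned set `Δ_Φ^y(E)` has Lebesgue measure zero, and hence
`dim_H {y : |Δ_Φ^y(E)| = 0} ≥ (d+1)/2`. -/
theorem minkowski_distance_counterexample_odd
    (k : ℕ) (hk : 1 ≤ k) (d : ℕ) (hdk : d = 2 * k + 1)
    (Φ : EuclideanSpace ℝ (Fin d) → EuclideanSpace ℝ (Fin d) → ℝ)
    (hΦ : ∀ x y, Φ x y = ∑ i : Fin d, (-1 : ℝ) ^ (i : ℕ) * (x i - y i) ^ 2)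
    (A : Set ℝ) (hA : MeasurableSet A) (hAdim : dimH A = 1) (hAvol : volume A = 0)
    (E W : Set (EuclideanSpace ℝ (Fin d)))
    (hE : E = {x : EuclideanSpace ℝ (Fin d) |
      x ⟨0, by omega⟩ ∈ A ∧ ∀ j : Fin k,
        x ⟨2 * (j : ℕ) + 1, by have := j.isLt; omega⟩
          = x ⟨2 * (j : ℕ) + 2, by have := j.isLt; omega⟩})
    (hW : W = {y : EuclideanSpace ℝ (Fin d) |
      ∀ j : Fin k,
        y ⟨2 * (j : ℕ) + 1, by have := j.isLt; omega⟩
          = y ⟨2 * (j : ℕ) + 2, by have := j.isLt; omega⟩}) :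
    dimH E = ((d : ℝ≥0∞) + 1) / 2 ∧
    (∃ S : Submodule ℝ (EuclideanSpace ℝ (Fin d)),
      (S : Set (EuclideanSpace ℝ (Fin d))) = W ∧ Module.finrank ℝ S = (d + 1) / 2) ∧
    (∀ y ∈ W, volume ((fun x => Φ x y) '' E) = 0) ∧
    ((d : ℝ≥0∞) + 1) / 2
      ≤ dimH {y : EuclideanSpace ℝ (Fin d) | volume ((fun x => Φ x y) '' E) = 0} := by
  subst hdk
  classical
  -- value of the dimension
  have hval : (((2 * k + 1 : ℕ) : ℝ≥0∞) + 1) / 2 = 1 + (k : ℝ≥0∞) := by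
    symm
    rw [ENNReal.eq_div_iff (by norm_num) (by norm_num)]
    push_cast
    ring
  have hfinP : Module.finrank ℝ (ℝ × (Fin k → ℝ)) = 1 + k := by
    simp [Module.finrank_prod, Module.finrank_pi, Module.finrank_self]
  have hdimPuniv : dimH (Set.univ : Set (ℝ × (Fin k → ℝ))) = 1 + (k : ℝ≥0∞) := by
    rw [Real.dimH_univ_eq_finrank, hfinP]
    push_cast
    ring
  have hLlip : LipschitzWith ‖(Lmap k).toContinuousLinearMap‖₊ ⇑(Lmap k) := by
    have := (Lmap k).toContinuousLinearMap.lipschitz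
    rwa [LinearMap.coe_toContinuousLinearMap'] at this
  obtain ⟨K, hK0, hKanti⟩ :=
    (Lmap k).exists_antilipschitzWith (LinearMap.ker_eq_bot.2 (Lmap_inj k))
  -- E as an image
  have hEimg : E = ⇑(Lmap k) '' (A ×ˢ Set.univ) := by
    rw [hE]
    ext x
    constructor
    · rintro ⟨hx0, hxp⟩
      exact ⟨(x ⟨0, by omega⟩, fun j => x ⟨2 * (j : ℕ) + 1, by have := j.isLt; omega⟩),
        ⟨hx0, trivial⟩, Lmap_section x hxp⟩
    · rintro ⟨p, ⟨hp1, -⟩, rfl⟩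
      refine ⟨by rw [Lmap_zero]; exact hp1, fun j => ?_⟩
      rw [Lmap_odd p (j : ℕ) j.isLt (by have := j.isLt; omega),
        Lmap_even p (j : ℕ) j.isLt (by have := j.isLt; omega)]
  -- W as an image
  have hWimg : W = ⇑(Lmap k) '' Set.univ := by
    rw [Set.image_univ, hW]
    ext y
    constructor
    · intro hy
      exact ⟨(y ⟨0, by omega⟩, fun j => y ⟨2 * (j : ℕ) + 1, by have := j.isLt; omega⟩),
        Lmap_section y hy⟩
    · rintro ⟨p, rfl⟩ j
      rw [Lmap_odd p (j : ℕ) j.isLt (by have := j.isLt; omega),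
        Lmap_even p (j : ℕ) j.isLt (by have := j.isLt; omega)]
  -- the pinned value computation
  have hPhi : ∀ y ∈ W, ∀ x ∈ E,
      Φ x y = (x ⟨0, by omega⟩ - y ⟨0, by omega⟩) ^ 2 := by
    intro y hy x hx
    rw [hW] at hy
    rw [hE] at hx
    rw [hΦ]
    set g : ℕ → ℝ := fun i =>
      if h : i < 2 * k + 1 then (-1 : ℝ) ^ i * (x ⟨i, h⟩ - y ⟨i, h⟩) ^ 2 else 0 with hgdef
    have hsum : ∑ i : Fin (2 * k + 1), (-1 : ℝ) ^ (i : ℕ) * (x i - y i) ^ 2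
        = ∑ i ∈ Finset.range (2 * k + 1), g i := by
      rw [← Fin.sum_univ_eq_sum_range g (2 * k + 1)]
      refine Finset.sum_congr rfl fun i _ => ?_
      simp only [hgdef, dif_pos i.isLt]
    rw [hsum, sum_cancel_pairs k g ?_]
    · simp only [hgdef, dif_pos (show 0 < 2 * k + 1 by omega)]
      norm_num
    · intro j hj
      have h1 : 2 * j + 1 < 2 * k + 1 := by omega
      have h2 : 2 * j + 2 < 2 * k + 1 := by omega
      simp only [hgdef, dif_pos h1, dif_pos h2]
      have hxp : x ⟨2 * j + 1, h1⟩ = x ⟨2 * j + 2, h2⟩ := hx.2 ⟨j, hj⟩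
      have hyp : y ⟨2 * j + 1, h1⟩ = y ⟨2 * j + 2, h2⟩ := hy ⟨j, hj⟩
      have hodd : ((-1 : ℝ)) ^ (2 * j + 1) = -1 := Odd.neg_one_pow ⟨j, by ring⟩
      have heven : ((-1 : ℝ)) ^ (2 * j + 2) = 1 := Even.neg_one_pow ⟨j + 1, by ring⟩
      rw [hodd, heven, hxp, hyp]
      ring
  -- part 3
  have hpart3 : ∀ y ∈ W, volume ((fun x => Φ x y) '' E) = 0 := by
    intro y hy
    refine measure_mono_null ?_ (null_image_sq hAvol (y ⟨0, by omega⟩))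
    rintro z ⟨x, hx, rfl⟩
    exact ⟨x ⟨0, by omega⟩, (hE ▸ hx).1, (hPhi y hy x hx).symm⟩
  refine ⟨?_, ?_, hpart3, ?_⟩
  · -- dimension of E
    rw [hval, hEimg]
    refine le_antisymm ?_ ?_
    · exact le_trans (hLlip.dimH_image_le _)
        (le_trans (dimH_mono (subset_univ _)) hdimPuniv.le)
    · exact le_trans (dimH_prod_ge A hAdim) (hKanti.le_dimH_image _)
  · -- the subspace
    refine ⟨LinearMap.range (Lmap k), ?_, ?_⟩
    · rw [hWimg, LinearMap.coe_range, Set.image_univ]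
    · rw [LinearMap.finrank_range_of_inj (Lmap_inj k), hfinP]
      omega
  · -- part 4
    rw [hval]
    calc (1 : ℝ≥0∞) + k = dimH (Set.univ : Set (ℝ × (Fin k → ℝ))) := hdimPuniv.symm
      _ ≤ dimH (⇑(Lmap k) '' Set.univ) := hKanti.le_dimH_image _
      _ ≤ _ := dimH_mono (by rw [← hWimg]; exact fun y hy => hpart3 y hy)
end
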